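/- Let {φ_k} be OPUC for a Borel probability measure μ on the unit circle. For z, w ∈ ℂ with z·conj(w) ≠ 1, Σ_{j=0}^n φ_j′(z)·conj(φ_j′(w)) = ( R_n(z,w)·(1 − z·conj(w)) + z·conj(S_n(w,z)) + conj(w)·S_n(z,w) + (1 + z·conj(w))·K_n(z,w) ) / ( 1 − z·conj(w) )², where K_n(z,w) = Σ_{j=0}^n φ_j(z)·conj(φ_j(w)), S_n(z,w) = conj( (φ_{n+1}^*)′(w) )·φ_{n+1}^*(z) − conj( φ_{n+1}′(w) )·φ_{n+1}(z), and R_n(z,w) = conj( (φ_{n+1}^*)′(w) )·(φ_{n+1}^*)′(z) − conj( φ_{n+1}′(w) )·φ_{n+1}′(z). -/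

import Mathlib

/-!
Both `φ₀, …, φₙ₊₁` and `zφ₀, …, zφₙ, φₙ₊₁*` are orthonormal bases of the polynomials of degree
at most `n + 1` (multiplication by `z` and reversal preserve the inner product on the circle, and
`zφⱼ ⟂ φₙ₊₁*` because `φₙ₊₁` is orthogonal to all polynomials of lower degree). The change of basis
is unitary, so `∑ ℓ(bᵢ)·conj(ℓ'(bᵢ))` is the same for both bases, for any linear functionals
`ℓ, ℓ'`. Taking for `ℓ, ℓ'` the functionals `p ↦ p(z)`, `p ↦ p'(z)` and `p ↦ p(w)`, `p ↦ p'(w)`,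
and using `(zp)' = p + zp'`, gives three linear relations between the kernels
`∑ φⱼ^{(a)}(z)·conj(φⱼ^{(b)}(w))`, `a, b ∈ {0, 1}`; eliminating the mixed ones yields the formula.
-/

open MeasureTheory Polynomial Finset

noncomputable section

/-- The reversed polynomial `p*(z) = z^n·conj(p(1/conj z))`. -/
def starPoly (p : Polynomial ℂ) : Polynomial ℂ := (p.map (starRingEnd ℂ)).reverse

open ComplexConjugate

section UnitaryChangeOfBasis

open Matrix

variable {ι V : Type*} [Fintype ι] [DecidableEq ι] [AddCommGroup V] [Module ℂ V]

theorem sum_apply_mul_conj_apply_of_mem_unitaryGroup {U : Matrix ι ι ℂ}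
    (hU : U ∈ unitaryGroup ι ℂ) {b e : ι → V} (hb : ∀ i, b i = ∑ j, U i j • e j)
    (ℓ ℓ' : V →ₗ[ℂ] ℂ) :
    ∑ i, ℓ (b i) * conj (ℓ' (b i)) = ∑ j, ℓ (e j) * conj (ℓ' (e j)) := by
  have hmulVec : ∀ f : V →ₗ[ℂ] ℂ, (fun i => f (b i)) = U *ᵥ fun j => f (e j) := fun f => by
    ext i
    simp [hb, mulVec, dotProduct]
  set x := fun j => ℓ (e j)
  set y := fun j => ℓ' (e j)
  calc ∑ i, ℓ (b i) * conj (ℓ' (b i)) = (U *ᵥ x) ⬝ᵥ star (U *ᵥ y) := by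
        rw [← hmulVec, ← hmulVec]; rfl
    _ = star y ⬝ᵥ ((star U * U) *ᵥ x) := by
        rw [star_mulVec, dotProduct_comm, ← dotProduct_mulVec, mulVec_mulVec, star_eq_conjTranspose]
    _ = ∑ j, ℓ (e j) * conj (ℓ' (e j)) := by
        rw [mem_unitaryGroup_iff'.mp hU, one_mulVec, dotProduct_comm]; rfl

end UnitaryChangeOfBasis

theorem exp_mul_I_mul_conj (θ : ℝ) :
    Complex.exp (θ * Complex.I) * conj (Complex.exp (θ * Complex.I)) = 1 := by
  rw [← Complex.exp_conj, ← Complex.exp_add]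
  simp

theorem pow_mul_conj_pow {u : ℂ} (hu : u * conj u = 1) (n : ℕ) : u ^ n * conj u ^ n = 1 := by
  rw [← mul_pow, hu, one_pow]

theorem eval_starPoly {u : ℂ} (hu : u * conj u = 1) (p : ℂ[X]) :
    (starPoly p).eval u = u ^ p.natDegree * conj (p.eval u) := by
  have hinv : (conj u)⁻¹ = u := inv_eq_of_mul_eq_one_left hu
  have := invertibleOfNonzero (right_ne_zero_of_mul_eq_one hu)
  have h := eval₂_reverse_mul_pow (RingHom.id ℂ) (conj u) (p.map conj)
  rw [eval₂_id, eval₂_id, invOf_eq_inv, hinv, natDegree_map, eval_map, eval₂_at_apply] at h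
  rw [starPoly]
  linear_combination
    u ^ p.natDegree * h - (p.map conj).reverse.eval u * pow_mul_conj_pow hu p.natDegree

def circleInner (μ : Measure ℝ) (p q : ℂ[X]) : ℂ :=
  ∫ θ, p.eval (Complex.exp (θ * Complex.I)) * conj (q.eval (Complex.exp (θ * Complex.I))) ∂μ

section CircleInner

variable (μ : Measure ℝ)

theorem integrable_eval_mul_conj_eval [IsFiniteMeasure μ] (p q : ℂ[X]) :
    Integrable (fun θ : ℝ => p.eval (Complex.exp (θ * Complex.I)) *
      conj (q.eval (Complex.exp (θ * Complex.I)))) μ := by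
  have hg : Continuous fun u : ℂ => p.eval u * conj (q.eval u) := by fun_prop
  obtain ⟨C, hC⟩ := (isCompact_sphere (0 : ℂ) 1).exists_bound_of_continuousOn hg.continuousOn
  refine Integrable.of_bound (by fun_prop) C (ae_of_all _ fun θ => hC _ ?_)
  simp [Complex.norm_exp_ofReal_mul_I]

theorem conj_circleInner (p q : ℂ[X]) : conj (circleInner μ p q) = circleInner μ q p := by
  rw [circleInner, ← integral_conj]
  refine congrArg (integral μ) (funext fun θ => ?_)
  simp only [map_mul, Complex.conj_conj, mul_comm]

theorem circleInner_sum_smul_left [IsFiniteMeasure μ] {κ : Type*} (s : Finset κ) (c : κ → ℂ)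
    (f : κ → ℂ[X]) (q : ℂ[X]) :
    circleInner μ (∑ j ∈ s, c j • f j) q = ∑ j ∈ s, c j * circleInner μ (f j) q := by
  simp only [circleInner, ← integral_const_mul]
  rw [← integral_finsetSum _ fun j _ => (integrable_eval_mul_conj_eval μ (f j) q).const_mul (c j)]
  simp only [eval_finsetSum, eval_smul, smul_eq_mul, sum_mul, mul_assoc]

theorem circleInner_congr {p q p' q' : ℂ[X]}
    (h : ∀ u : ℂ, u * conj u = 1 → p.eval u * conj (q.eval u) = p'.eval u * conj (q'.eval u)) :
    circleInner μ p q = circleInner μ p' q' :=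
  congrArg (integral μ) (funext fun θ => h _ (exp_mul_I_mul_conj θ))

theorem circleInner_X_mul_X_mul (p q : ℂ[X]) : circleInner μ (X * p) (X * q) = circleInner μ p q :=
  circleInner_congr μ fun u hu => by
    simp only [eval_mul, eval_X, map_mul]
    linear_combination p.eval u * conj (q.eval u) * hu

theorem circleInner_starPoly_starPoly {p q : ℂ[X]} (h : p.natDegree = q.natDegree) :
    circleInner μ (starPoly p) (starPoly q) = circleInner μ q p :=
  circleInner_congr μ fun u hu => by
    simp only [eval_starPoly hu, map_mul, map_pow, Complex.conj_conj, h]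
    linear_combination q.eval u * conj (p.eval u) * pow_mul_conj_pow hu q.natDegree

theorem circleInner_X_mul_starPoly {p q : ℂ[X]} {k : ℕ} (h : p.natDegree + k + 1 = q.natDegree) :
    circleInner μ (X * p) (starPoly q) = circleInner μ q (X ^ k * starPoly p) :=
  circleInner_congr μ fun u hu => by
    simp only [eval_mul, eval_X, eval_pow, eval_starPoly hu, map_mul, map_pow, Complex.conj_conj,
      ← h]
    linear_combination p.eval u * q.eval u * conj u ^ (p.natDegree + k) * hu

theorem of_circleInner_mem_unitaryGroup [IsFiniteMeasure μ] {ι : Type*} [Fintype ι]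
    [DecidableEq ι] {b e : ι → ℂ[X]}
    (hb : ∀ i i', circleInner μ (b i) (b i') = if i = i' then 1 else 0)
    (hexp : ∀ i, b i = ∑ j, circleInner μ (b i) (e j) • e j) :
    Matrix.of (fun i j => circleInner μ (b i) (e j)) ∈ Matrix.unitaryGroup ι ℂ := by
  rw [Matrix.mem_unitaryGroup_iff]
  ext i i'
  rw [Matrix.mul_apply, Matrix.one_apply, ← hb]
  conv_rhs => rw [hexp i, circleInner_sum_smul_left]
  simp [conj_circleInner]

end CircleInner

theorem natDegree_starPoly_le (p : ℂ[X]) : (starPoly p).natDegree ≤ p.natDegree :=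
  (reverse_natDegree_le _).trans (natDegree_map _).le

def shiftedBasis (φ : ℕ → ℂ[X]) (n : ℕ) : Fin (n + 2) → ℂ[X] :=
  Fin.lastCases (starPoly (φ (n + 1))) fun i => X * φ i

section OrthonormalPolynomials

variable {μ : Measure ℝ} {φ : ℕ → ℂ[X]} (hdeg : ∀ k, (φ k).degree = k)
include hdeg

theorem exists_sum_smul_eq_of_degree_lt {m : ℕ} {p : ℂ[X]} (hp : p.degree < m) :
    ∃ c : Fin m → ℂ, ∑ i, c i • φ i = p := by
  let S : Sequence ℂ := ⟨φ, hdeg⟩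
  have hspan : p ∈ Submodule.span ℂ (Set.range fun i : Fin m => φ i) := by
    rw [Set.range_comp' φ Fin.val, Fin.range_val, S.span_degreeLT fun i _ => ?_]
    · exact mem_degreeLT.mpr hp
    · exact isUnit_iff_ne_zero.mpr (leadingCoeff_ne_zero.mpr (S.ne_zero i))
  exact (Submodule.mem_span_range_iff_exists_fun ℂ).mp hspan

theorem degree_shiftedBasis_lt (n : ℕ) (i : Fin (n + 2)) :
    (shiftedBasis φ n i).degree < (n + 2 : ℕ) := by
  induction i using Fin.lastCases with
  | last =>
    refine degree_le_natDegree.trans_lt (WithBot.coe_lt_coe.mpr (Nat.lt_succ_of_le ?_))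
    simpa [shiftedBasis, natDegree_eq_of_degree_eq_some (hdeg _)] using
      natDegree_starPoly_le (φ (n + 1))
  | cast i =>
    simp [shiftedBasis, mul_comm X, hdeg]
    exact_mod_cast (by omega : (i : ℕ) + 1 < n + 2)

variable [IsFiniteMeasure μ] (horth : ∀ n m, circleInner μ (φ n) (φ m) = if n = m then 1 else 0)
include horth

theorem circleInner_eq_zero_of_degree_lt {m : ℕ} {p : ℂ[X]} (hp : p.degree < m) :
    circleInner μ p (φ m) = 0 := by
  obtain ⟨c, rfl⟩ := exists_sum_smul_eq_of_degree_lt hdeg hp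
  rw [circleInner_sum_smul_left]
  exact sum_eq_zero fun i _ => by rw [horth, if_neg i.isLt.ne, mul_zero]

theorem eq_sum_circleInner_smul_of_degree_lt {m : ℕ} {p : ℂ[X]} (hp : p.degree < m) :
    p = ∑ i : Fin m, circleInner μ p (φ i) • φ i := by
  obtain ⟨c, rfl⟩ := exists_sum_smul_eq_of_degree_lt hdeg hp
  refine sum_congr rfl fun k _ => ?_
  rw [circleInner_sum_smul_left]
  simp [horth, Fin.val_inj]

theorem circleInner_X_mul_starPoly_eq_zero {j n : ℕ} (hj : j ≤ n) :
    circleInner μ (X * φ j) (starPoly (φ (n + 1))) = 0 := by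
  obtain ⟨k, rfl⟩ := Nat.exists_eq_add_of_le hj
  have hnat : ∀ i, (φ i).natDegree = i := fun i => natDegree_eq_of_degree_eq_some (hdeg i)
  have hlt : (X ^ k * starPoly (φ j)).degree < ((j + k + 1 : ℕ) : WithBot ℕ) := by
    refine degree_le_natDegree.trans_lt (Nat.cast_lt.mpr (natDegree_mul_le.trans_lt ?_))
    have := natDegree_starPoly_le (φ j)
    rw [hnat] at this
    rw [natDegree_X_pow]
    omega
  rw [circleInner_X_mul_starPoly μ (by rw [hnat, hnat]), ← conj_circleInner,
    circleInner_eq_zero_of_degree_lt hdeg horth hlt, map_zero]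

theorem circleInner_shiftedBasis (n : ℕ) (i i' : Fin (n + 2)) :
    circleInner μ (shiftedBasis φ n i) (shiftedBasis φ n i') = if i = i' then 1 else 0 := by
  induction i using Fin.lastCases <;> induction i' using Fin.lastCases
  case last.last =>
    simp [shiftedBasis, circleInner_starPoly_starPoly, horth]
  case last.cast i' =>
    simp [shiftedBasis, ← conj_circleInner μ (X * φ i'),
      circleInner_X_mul_starPoly_eq_zero hdeg horth (Nat.le_of_lt_succ i'.isLt),
      (Fin.castSucc_ne_last i').symm]
  case cast.last i =>
    simp [shiftedBasis, circleInner_X_mul_starPoly_eq_zero hdeg horth (Nat.le_of_lt_succ i.isLt),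
      Fin.castSucc_ne_last]
  case cast.cast i i' =>
    simp [shiftedBasis, circleInner_X_mul_X_mul, horth, Fin.val_inj]

theorem sum_apply_X_mul_add_apply_starPoly (n : ℕ) (ℓ ℓ' : ℂ[X] →ₗ[ℂ] ℂ) :
    ∑ j ∈ range (n + 1), ℓ (X * φ j) * conj (ℓ' (X * φ j))
        + ℓ (starPoly (φ (n + 1))) * conj (ℓ' (starPoly (φ (n + 1))))
      = ∑ j ∈ range (n + 1), ℓ (φ j) * conj (ℓ' (φ j)) + ℓ (φ (n + 1)) * conj (ℓ' (φ (n + 1))) := by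
  have hexp (i : Fin (n + 2)) := eq_sum_circleInner_smul_of_degree_lt hdeg horth
    (degree_shiftedBasis_lt hdeg n i)
  have hU := of_circleInner_mem_unitaryGroup μ (circleInner_shiftedBasis hdeg horth n) hexp
  have := sum_apply_mul_conj_apply_of_mem_unitaryGroup hU hexp ℓ ℓ'
  simp only [Fin.sum_univ_castSucc (n := n + 1), shiftedBasis, Fin.lastCases_last,
    Fin.lastCases_castSucc, Fin.val_castSucc, Fin.val_last] at this
  simpa only [Fin.sum_univ_eq_sum_range (fun j => ℓ (X * φ j) * conj (ℓ' (X * φ j))),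
    Fin.sum_univ_eq_sum_range (fun j => ℓ (φ j) * conj (ℓ' (φ j)))] using this

theorem one_sub_mul_sum_derivative_mul_conj_eval (n : ℕ) (z w : ℂ) :
    (1 - z * conj w) * ∑ j ∈ range (n + 1), (φ j).derivative.eval z * conj ((φ j).eval w)
      = conj w * ∑ j ∈ range (n + 1), (φ j).eval z * conj ((φ j).eval w)
        + ((starPoly (φ (n + 1))).derivative.eval z * conj ((starPoly (φ (n + 1))).eval w)
          - (φ (n + 1)).derivative.eval z * conj ((φ (n + 1)).eval w)) := by
  have h := sum_apply_X_mul_add_apply_starPoly hdeg horth n ((leval z).comp derivative) (leval w)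
  simp only [LinearMap.comp_apply, leval_apply, derivative_mul, derivative_X, one_mul,
    eval_mul, eval_X, map_mul, map_add] at h
  have hexpand : ∑ j ∈ range (n + 1),
        ((φ j).eval z + z * (φ j).derivative.eval z) * (conj w * conj ((φ j).eval w))
      = conj w * ∑ j ∈ range (n + 1), (φ j).eval z * conj ((φ j).eval w)
        + z * conj w * ∑ j ∈ range (n + 1), (φ j).derivative.eval z * conj ((φ j).eval w) := by
    simp only [mul_sum, ← sum_add_distrib]
    exact sum_congr rfl fun j _ => by ring
  linear_combination hexpand - h

theorem one_sub_mul_sum_eval_mul_conj_derivative (n : ℕ) (z w : ℂ) :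
    (1 - z * conj w) * ∑ j ∈ range (n + 1), (φ j).eval z * conj ((φ j).derivative.eval w)
      = z * ∑ j ∈ range (n + 1), (φ j).eval z * conj ((φ j).eval w)
        + ((starPoly (φ (n + 1))).eval z * conj ((starPoly (φ (n + 1))).derivative.eval w)
          - (φ (n + 1)).eval z * conj ((φ (n + 1)).derivative.eval w)) := by
  have h := sum_apply_X_mul_add_apply_starPoly hdeg horth n (leval z) ((leval w).comp derivative)
  simp only [LinearMap.comp_apply, leval_apply, derivative_mul, derivative_X, one_mul,
    eval_mul, eval_X, map_mul, map_add] at h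
  have hexpand : ∑ j ∈ range (n + 1),
        z * (φ j).eval z * (conj ((φ j).eval w) + conj w * conj ((φ j).derivative.eval w))
      = z * ∑ j ∈ range (n + 1), (φ j).eval z * conj ((φ j).eval w)
        + z * conj w * ∑ j ∈ range (n + 1), (φ j).eval z * conj ((φ j).derivative.eval w) := by
    simp only [mul_sum, ← sum_add_distrib]
    exact sum_congr rfl fun j _ => by ring
  linear_combination hexpand - h

theorem one_sub_mul_sum_derivative_mul_conj_derivative (n : ℕ) (z w : ℂ) :
    (1 - z * conj w) * ∑ j ∈ range (n + 1),
        (φ j).derivative.eval z * conj ((φ j).derivative.eval w)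
      = ∑ j ∈ range (n + 1), (φ j).eval z * conj ((φ j).eval w)
        + z * ∑ j ∈ range (n + 1), (φ j).derivative.eval z * conj ((φ j).eval w)
        + conj w * ∑ j ∈ range (n + 1), (φ j).eval z * conj ((φ j).derivative.eval w)
        + ((starPoly (φ (n + 1))).derivative.eval z
            * conj ((starPoly (φ (n + 1))).derivative.eval w)
          - (φ (n + 1)).derivative.eval z * conj ((φ (n + 1)).derivative.eval w)) := by
  have h := sum_apply_X_mul_add_apply_starPoly hdeg horth n ((leval z).comp derivative)
    ((leval w).comp derivative)
  simp only [LinearMap.comp_apply, leval_apply, derivative_mul, derivative_X, one_mul,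
    eval_mul, eval_X, map_mul, map_add] at h
  have hexpand : ∑ j ∈ range (n + 1), ((φ j).eval z + z * (φ j).derivative.eval z)
        * (conj ((φ j).eval w) + conj w * conj ((φ j).derivative.eval w))
      = ∑ j ∈ range (n + 1), (φ j).eval z * conj ((φ j).eval w)
        + z * ∑ j ∈ range (n + 1), (φ j).derivative.eval z * conj ((φ j).eval w)
        + conj w * ∑ j ∈ range (n + 1), (φ j).eval z * conj ((φ j).derivative.eval w)
        + z * conj w * ∑ j ∈ range (n + 1),
          (φ j).derivative.eval z * conj ((φ j).derivative.eval w) := by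
    simp only [mul_sum, ← sum_add_distrib]
    exact sum_congr rfl fun j _ => by ring
  linear_combination hexpand - h

end OrthonormalPolynomials

theorem christoffel_darboux_derivative_11_general
    (μ : Measure ℝ) [IsProbabilityMeasure μ]
    (φ : ℕ → Polynomial ℂ)
    (hdeg : ∀ k, (φ k).degree = k)
    (horth : ∀ n m, ∫ θ, (φ n).eval (Complex.exp (θ * Complex.I)) *
        (starRingEnd ℂ) ((φ m).eval (Complex.exp (θ * Complex.I))) ∂μ
        = if n = m then 1 else 0)
    (n : ℕ) (z w : ℂ) (hzw : z * (starRingEnd ℂ) w ≠ 1)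
    (K R : ℂ) (S : ℂ → ℂ → ℂ)
    (hK : K = ∑ j ∈ Finset.range (n + 1),
        (φ j).eval z * (starRingEnd ℂ) ((φ j).eval w))
    (hS : ∀ x y : ℂ, S x y = (starRingEnd ℂ) ((starPoly (φ (n+1))).derivative.eval y) *
          (starPoly (φ (n+1))).eval x
        - (starRingEnd ℂ) ((φ (n+1)).derivative.eval y) * (φ (n+1)).eval x)
    (hR : R = (starRingEnd ℂ) ((starPoly (φ (n+1))).derivative.eval w) *
          (starPoly (φ (n+1))).derivative.eval z
        - (starRingEnd ℂ) ((φ (n+1)).derivative.eval w) * (φ (n+1)).derivative.eval z) :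
    ∑ j ∈ Finset.range (n + 1),
        (φ j).derivative.eval z * (starRingEnd ℂ) ((φ j).derivative.eval w)
      = (R * (1 - z * (starRingEnd ℂ) w) + z * (starRingEnd ℂ) (S w z)
          + (starRingEnd ℂ) w * S z w + (1 + z * (starRingEnd ℂ) w) * K)
        / (1 - z * (starRingEnd ℂ) w) ^ 2 := by
  have h10 := one_sub_mul_sum_derivative_mul_conj_eval hdeg horth n z w
  have h01 := one_sub_mul_sum_eval_mul_conj_derivative hdeg horth n z w
  have h11 := one_sub_mul_sum_derivative_mul_conj_derivative hdeg horth n z w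
  have hzw' : (1 : ℂ) - z * conj w ≠ 0 := sub_ne_zero.mpr hzw.symm
  rw [eq_div_iff (pow_ne_zero 2 hzw'), hK, hR, hS, hS]
  simp only [map_sub, map_mul, Complex.conj_conj]
  linear_combination (1 - z * conj w) * h11 + z * h10 + conj w * h01

/-- twice-differentiated Christoffel–Darboux formula for
`Σ_{j=0}^n φ_j′(z)·conj(φ_j′(w))`. -/
theorem christoffel_darboux_derivative_11
    (μ : Measure ℝ) [IsProbabilityMeasure μ]
    (φ : ℕ → Polynomial ℂ)
    (hdeg : ∀ k, (φ k).degree = k)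
    (hlead : ∀ k, ∃ κ : ℝ, 0 < κ ∧ (φ k).leadingCoeff = (κ : ℂ))
    (horth : ∀ n m, ∫ θ, (φ n).eval (Complex.exp (θ * Complex.I)) *
        (starRingEnd ℂ) ((φ m).eval (Complex.exp (θ * Complex.I))) ∂μ
        = if n = m then 1 else 0)
    (n : ℕ) (z w : ℂ) (hzw : z * (starRingEnd ℂ) w ≠ 1)
    (K R : ℂ) (S : ℂ → ℂ → ℂ)
    (hK : K = ∑ j ∈ Finset.range (n + 1),
        (φ j).eval z * (starRingEnd ℂ) ((φ j).eval w))
    (hS : ∀ x y : ℂ, S x y = (starRingEnd ℂ) ((starPoly (φ (n+1))).derivative.eval y) *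
          (starPoly (φ (n+1))).eval x
        - (starRingEnd ℂ) ((φ (n+1)).derivative.eval y) * (φ (n+1)).eval x)
    (hR : R = (starRingEnd ℂ) ((starPoly (φ (n+1))).derivative.eval w) *
          (starPoly (φ (n+1))).derivative.eval z
        - (starRingEnd ℂ) ((φ (n+1)).derivative.eval w) * (φ (n+1)).derivative.eval z) :
    ∑ j ∈ Finset.range (n + 1),
        (φ j).derivative.eval z * (starRingEnd ℂ) ((φ j).derivative.eval w)
      = (R * (1 - z * (starRingEnd ℂ) w) + z * (starRingEnd ℂ) (S w z)
          + (starRingEnd ℂ) w * S z w + (1 + z * (starRingEnd ℂ) w) * K)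
        / (1 - z * (starRingEnd ℂ) w) ^ 2 :=
  christoffel_darboux_derivative_11_general μ φ hdeg horth n z w hzw K R S hK hS hR
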